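/- Let γ : [0,∞) → ℝ be the dyadic pulse train defined by partitioning [0,∞) into consecutive intervals I_k := [∑_{j=1}^{k-1} 2^j, ∑_{j=1}^{k} 2^j) for k = 1, 2, 3, …, setting γ(t) = 1 for t ∈ I_k with k odd and γ(t) = 0 otherwise, and define the regressor w(t) := (γ(t), 1 − γ(t)) ∈ ℝ². Then for every α = (α₁, α₂) ∈ ℝ² with α₁ ≠ 0 and α₂ ≠ 0, the scalar signal t ↦ α₁γ(t) + α₂(1 − γ(t)) is persistently exciting; consequently the non-PE set of w equals (ℝ × {0}) ∪ ({0} × ℝ), which is not a linear subspace of ℝ², so w is not a regular regressor. -/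

import Mathlib

open MeasureTheory Filter
open scoped Classical

noncomputable section

/-- A scalar signal `u` is persistently exciting (PE). -/
def ScalarPE (u : ℝ → ℝ) : Prop :=
  ∃ β T : ℝ, 0 < β ∧ 0 < T ∧
    ∀ t : ℝ, 0 ≤ t → β ≤ (1 / T) * ∫ τ in t..(t + T), (u τ) ^ 2

/-- A regressor `w` is persistently exciting (PE), quadratic-form formulation. -/
def RegressorPE {E : Type*} [NormedAddCommGroup E] [InnerProductSpace ℝ E]
    (w : ℝ → E) : Prop :=
  ∃ β T : ℝ, 0 < β ∧ 0 < T ∧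
    ∀ t : ℝ, 0 ≤ t → ∀ α : E,
      β * ‖α‖ ^ 2 ≤ (1 / T) * ∫ τ in t..(t + T), (inner ℝ α (w τ) : ℝ) ^ 2

/-- A regressor `w` is non-PE if every projection `⟨α, w⟩` fails to be PE. -/
def NonPE {E : Type*} [NormedAddCommGroup E] [InnerProductSpace ℝ E]
    (w : ℝ → E) : Prop :=
  ∀ α : E, ¬ ScalarPE (fun t => (inner ℝ α (w t) : ℝ))

/-- The non-PE set `𝒲*` of a regressor `w`. -/
def nonPESet {E : Type*} [NormedAddCommGroup E] [InnerProductSpace ℝ E]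
    (w : ℝ → E) : Set E :=
  {α : E | ¬ ScalarPE (fun t => (inner ℝ α (w t) : ℝ))}

/-- A regular regressor: bounded (on `[0, ∞)`) and its non-PE set is a linear subspace. -/
def RegularRegressor {E : Type*} [NormedAddCommGroup E] [InnerProductSpace ℝ E]
    (w : ℝ → E) : Prop :=
  (∃ M : ℝ, ∀ t : ℝ, 0 ≤ t → ‖w t‖ ≤ M) ∧
  ∃ S : Submodule ℝ E, (S : Set E) = nonPESet w

/-- The dyadic pulse train: `[0, ∞)` is partitioned into consecutive intervals
`I_k = [∑_{j=1}^{k-1} 2^j, ∑_{j=1}^{k} 2^j) = [2^k - 2, 2^(k+1) - 2)` for `k = 1, 2, …`;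
`γ(t) = 1` on `I_k` for odd `k`, and `γ(t) = 0` elsewhere. -/
def gammaPulse (t : ℝ) : ℝ :=
  if ∃ k : ℕ, Odd k ∧ ((2 : ℝ) ^ k - 2 ≤ t ∧ t < (2 : ℝ) ^ (k + 1) - 2) then 1 else 0

def Pred (τ : ℝ) : Prop :=
  ∃ k : ℕ, Odd k ∧ ((2 : ℝ) ^ k - 2 ≤ τ ∧ τ < (2 : ℝ) ^ (k + 1) - 2)

lemma gammaPulse_eq (t : ℝ) : gammaPulse t = if Pred t then 1 else 0 := rfl

lemma measurable_pred : MeasurableSet {τ : ℝ | Pred τ} := by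
  have : {τ : ℝ | Pred τ} = ⋃ k : ℕ,
      {τ : ℝ | Odd k ∧ ((2:ℝ)^k - 2 ≤ τ ∧ τ < (2:ℝ)^(k+1) - 2)} := by
    ext τ; simp [Pred, Set.mem_iUnion]
  rw [this]
  apply MeasurableSet.iUnion
  intro k
  by_cases h : Odd k
  · have : {τ : ℝ | Odd k ∧ ((2:ℝ)^k - 2 ≤ τ ∧ τ < (2:ℝ)^(k+1) - 2)}
        = Set.Ico ((2:ℝ)^k - 2) ((2:ℝ)^(k+1) - 2) := by
      ext τ; simp [h, Set.mem_Ico]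
    rw [this]; exact measurableSet_Ico
  · simp [h]

lemma ii_ite (c d a b : ℝ) :
    IntervalIntegrable (fun τ => if Pred τ then c else d) volume a b := by
  have hm : Measurable (fun τ => if Pred τ then c else d) :=
    Measurable.ite measurable_pred measurable_const measurable_const
  rw [intervalIntegrable_iff]
  haveI : IsFiniteMeasure (volume.restrict (Set.uIoc a b)) := by
    constructor
    rw [Measure.restrict_apply_univ, Set.uIoc]
    exact measure_Ioc_lt_top
  apply Integrable.mono' (integrable_const (max |c| |d|)) hm.aestronglyMeasurable.restrict
  filter_upwards with x
  by_cases h : Pred x <;> simp [h, Real.norm_eq_abs, le_max_left, le_max_right]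

lemma pe_main (c d : ℝ) (hc : c ≠ 0) (hd : d ≠ 0) :
    ScalarPE (fun t => c * gammaPulse t + d * (1 - gammaPulse t)) := by
  have hsq : ∀ τ : ℝ, (c * gammaPulse τ + d * (1 - gammaPulse τ)) ^ 2
      = if Pred τ then c ^ 2 else d ^ 2 := by
    intro τ
    rw [gammaPulse_eq]
    by_cases h : Pred τ <;> simp [h] <;> ring
  refine ⟨min (c ^ 2) (d ^ 2), 1, lt_min (by positivity) (by positivity), one_pos, ?_⟩
  intro t ht
  have h1 : (∫ τ in t..(t + 1), (fun _ => min (c ^ 2) (d ^ 2)) τ)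
      ≤ ∫ τ in t..(t + 1), (c * gammaPulse τ + d * (1 - gammaPulse τ)) ^ 2 := by
    apply intervalIntegral.integral_mono_on (by linarith) intervalIntegrable_const
    · have := ii_ite (c ^ 2) (d ^ 2) t (t + 1)
      exact this.congr (fun x _ => (hsq x).symm)
    · intro x hx
      rw [hsq]
      by_cases h : Pred x <;> simp [h, min_le_left, min_le_right]
  simpa using h1

lemma interval_unique {k k' : ℕ} {τ : ℝ}
    (h1 : (2:ℝ)^k - 2 ≤ τ) (h2 : τ < (2:ℝ)^(k+1) - 2)
    (h3 : (2:ℝ)^k' - 2 ≤ τ) (h4 : τ < (2:ℝ)^(k'+1) - 2) : k = k' := by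
  by_contra hne
  rcases lt_or_gt_of_ne hne with h | h
  · have : (2:ℝ)^(k+1) ≤ (2:ℝ)^k' :=
      pow_le_pow_right₀ (by norm_num) (by omega)
    linarith
  · have : (2:ℝ)^(k'+1) ≤ (2:ℝ)^k :=
      pow_le_pow_right₀ (by norm_num) (by omega)
    linarith

lemma not_pe_of_zero_intervals (u : ℝ → ℝ)
    (h : ∀ T : ℝ, 0 < T → ∃ t : ℝ, 0 ≤ t ∧ ∀ τ ∈ Set.Icc t (t + T), u τ = 0) :
    ¬ ScalarPE u := by
  rintro ⟨β, T, hβ, hT, hPE⟩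
  obtain ⟨t, ht0, hz⟩ := h T hT
  have hint : (∫ τ in t..(t + T), (u τ) ^ 2) = 0 := by
    rw [intervalIntegral.integral_congr (g := fun _ => (0:ℝ))]
    · simp
    · intro τ hτ
      rw [Set.uIcc_of_le (by linarith)] at hτ
      simp [hz τ hτ]
  have := hPE t ht0
  rw [hint] at this
  simp at this
  linarith

lemma exists_odd_big (T : ℝ) : ∃ k : ℕ, Odd k ∧ T < 2 ^ k := by
  obtain ⟨n, hn⟩ := pow_unbounded_of_one_lt T (by norm_num : (1:ℝ) < 2)
  refine ⟨2 * n + 1, ⟨n, by ring⟩, lt_of_lt_of_le hn ?_⟩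
  exact pow_le_pow_right₀ (by norm_num) (by omega)

lemma exists_even_big (T : ℝ) : ∃ k : ℕ, Even k ∧ 1 ≤ k ∧ T < 2 ^ k := by
  obtain ⟨n, hn⟩ := pow_unbounded_of_one_lt T (by norm_num : (1:ℝ) < 2)
  refine ⟨2 * n + 2, ⟨n + 1, by ring⟩, by omega, lt_of_lt_of_le hn ?_⟩
  exact pow_le_pow_right₀ (by norm_num) (by omega)

lemma gamma_one_on_odd {k : ℕ} (hk : Odd k) {τ : ℝ}
    (h1 : (2:ℝ)^k - 2 ≤ τ) (h2 : τ < (2:ℝ)^(k+1) - 2) : gammaPulse τ = 1 := by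
  rw [gammaPulse_eq, if_pos ⟨k, hk, h1, h2⟩]

lemma gamma_zero_on_even {k : ℕ} (hk : Even k) {τ : ℝ}
    (h1 : (2:ℝ)^k - 2 ≤ τ) (h2 : τ < (2:ℝ)^(k+1) - 2) : gammaPulse τ = 0 := by
  rw [gammaPulse_eq, if_neg]
  rintro ⟨k', hk', h3, h4⟩
  have := interval_unique h1 h2 h3 h4
  subst this
  exact (Nat.not_odd_iff_even.mpr hk) hk'

lemma not_pe_zero_fst (d : ℝ) :
    ¬ ScalarPE (fun t => 0 * gammaPulse t + d * (1 - gammaPulse t)) := by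
  apply not_pe_of_zero_intervals
  intro T hT
  obtain ⟨k, hk, hTk⟩ := exists_odd_big T
  have hk1 : 1 ≤ k := hk.pos
  have h2k : (2:ℝ) ≤ 2 ^ k := by
    calc (2:ℝ) = 2 ^ 1 := (pow_one 2).symm
    _ ≤ 2 ^ k := pow_le_pow_right₀ (by norm_num) hk1
  refine ⟨(2:ℝ)^k - 2, by linarith, ?_⟩
  intro τ hτ
  have hg : gammaPulse τ = 1 := by
    apply gamma_one_on_odd hk hτ.1
    have : (2:ℝ)^(k+1) = 2 * 2 ^ k := by ring
    have := hτ.2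
    nlinarith
  simp [hg]

lemma not_pe_zero_snd (c : ℝ) :
    ¬ ScalarPE (fun t => c * gammaPulse t + 0 * (1 - gammaPulse t)) := by
  apply not_pe_of_zero_intervals
  intro T hT
  obtain ⟨k, hk, hk1, hTk⟩ := exists_even_big T
  have h2k : (2:ℝ) ≤ 2 ^ k := by
    calc (2:ℝ) = 2 ^ 1 := (pow_one 2).symm
    _ ≤ 2 ^ k := pow_le_pow_right₀ (by norm_num) hk1
  refine ⟨(2:ℝ)^k - 2, by linarith, ?_⟩
  intro τ hτ
  have hg : gammaPulse τ = 0 := by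
    apply gamma_zero_on_even hk hτ.1
    have : (2:ℝ)^(k+1) = 2 * 2 ^ k := by ring
    have := hτ.2
    nlinarith
  simp [hg]


theorem stmt2 (w : ℝ → EuclideanSpace ℝ (Fin 2))
    (hw : ∀ t : ℝ, w t 0 = gammaPulse t ∧ w t 1 = 1 - gammaPulse t) :
    (∀ α : EuclideanSpace ℝ (Fin 2), α 0 ≠ 0 → α 1 ≠ 0 →
      ScalarPE (fun t => α 0 * gammaPulse t + α 1 * (1 - gammaPulse t))) ∧
    nonPESet w = {α : EuclideanSpace ℝ (Fin 2) | α 0 = 0 ∨ α 1 = 0} ∧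
    (¬ ∃ S : Submodule ℝ (EuclideanSpace ℝ (Fin 2)),
      (S : Set (EuclideanSpace ℝ (Fin 2))) = nonPESet w) ∧
    ¬ RegularRegressor w := by
  have hinner : ∀ (α : EuclideanSpace ℝ (Fin 2)),
      (fun t => (inner ℝ α (w t) : ℝ))
        = fun t => α 0 * gammaPulse t + α 1 * (1 - gammaPulse t) := by
    intro α
    funext t
    simp [PiLp.inner_apply, RCLike.inner_apply, conj_trivial, Fin.sum_univ_two,
      (hw t).1, (hw t).2, mul_comm]
  have hset : nonPESet w = {α : EuclideanSpace ℝ (Fin 2) | α 0 = 0 ∨ α 1 = 0} := by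
    ext α
    simp only [nonPESet, Set.mem_setOf_eq, hinner α]
    constructor
    · intro hnot
      by_contra h
      push_neg at h
      exact hnot (pe_main _ _ h.1 h.2)
    · rintro (h0 | h1)
      · rw [h0]; exact not_pe_zero_fst (α 1)
      · rw [h1]; exact not_pe_zero_snd (α 0)
  have hnosub : ¬ ∃ S : Submodule ℝ (EuclideanSpace ℝ (Fin 2)),
      (S : Set (EuclideanSpace ℝ (Fin 2))) = nonPESet w := by
    rintro ⟨S, hS⟩
    rw [hset] at hS
    set a : EuclideanSpace ℝ (Fin 2) := WithLp.toLp 2 (fun i : Fin 2 => if i = 0 then (1:ℝ) else 0) with ha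
    set b : EuclideanSpace ℝ (Fin 2) := WithLp.toLp 2 (fun i : Fin 2 => if i = 0 then (0:ℝ) else 1) with hb
    have haS : a ∈ S := by
      rw [← SetLike.mem_coe, hS]
      right
      simp [ha]
    have hbS : b ∈ S := by
      rw [← SetLike.mem_coe, hS]
      left
      simp [hb]
    have habS : a + b ∈ S := S.add_mem haS hbS
    rw [← SetLike.mem_coe, hS] at habS
    have h0 : (a + b) 0 = 1 := by simp [ha, hb, PiLp.add_apply]
    have h1 : (a + b) 1 = 1 := by simp [ha, hb, PiLp.add_apply]
    rcases habS with h | h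
    · rw [h0] at h; norm_num at h
    · rw [h1] at h; norm_num at h
  refine ⟨fun α h0 h1 => pe_main _ _ h0 h1, hset, hnosub, fun hreg => hnosub hreg.2⟩
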